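/- arXiv:2401.00600 — 4 statements merged into one kernel-verified Lean document; each statement's English description precedes it below -/
import Mathlib

section
/- Let n ≥ 1, let a ≤ b be real numbers with b − a < 1, and for k = 1,…,n let r_k > 0 and φ_k ∈ [a,b] be real numbers. Set z_k = r_k·exp(iπφ_k) ∈ ℂ, Z = z_1 + ⋯ + z_n, m = r_1 + ⋯ + r_n, and φ̄ = (Σ r_kφ_k)/m. Let θ ∈ [a,b] be the unique real number with Z = |Z|·exp(iπθ). Then 0 ≤ log m − log|Z| ≤ −log(cos(π(b−a)/2)) and |φ̄ − θ| ≤ b − a. -/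
/-!
Projecting `Z` onto the bisector of the sector of arguments `[πa, πb]` gives
`|Z| ≥ m cos (π(b-a)/2)`, while `|Z| ≤ m` by the triangle inequality; this is the mass bound.
The average phase `φ̄` is a weighted mean of the `φ_k`, so it lies in `[a, b]` together with `θ`.
-/

open Complex Finset

open scoped Real

theorem Real.cos_half_width_le_cos_sub_midpoint {a b φ : ℝ} (hφ : φ ∈ Set.Icc a b)
    (hba : b - a ≤ 2) :
    Real.cos (π * (b - a) / 2) ≤ Real.cos (π * φ - π * ((a + b) / 2)) := by
  have hdist : |φ - (a + b) / 2| ≤ (b - a) / 2 :=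
    abs_le.2 ⟨by linarith [hφ.1], by linarith [hφ.2]⟩
  rw [← Real.cos_abs (π * φ - _), ← mul_sub, abs_mul, abs_of_pos Real.pi_pos]
  apply Real.cos_le_cos_of_nonneg_of_le_pi (by positivity) (by nlinarith [Real.pi_pos])
  nlinarith [Real.pi_pos]

theorem Real.cos_half_width_pos {a b : ℝ} (hab : a ≤ b) (hba : b - a < 1) :
    0 < Real.cos (π * (b - a) / 2) :=
  Real.cos_pos_of_mem_Ioo ⟨by nlinarith [Real.pi_pos], by nlinarith [Real.pi_pos]⟩

section

variable {ι : Type*} (s : Finset ι)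

theorem norm_sum_ofReal_mul_exp_le {r : ι → ℝ} (hr : ∀ i ∈ s, 0 ≤ r i) (x : ι → ℝ) :
    ‖∑ i ∈ s, (r i : ℂ) * exp (x i * I)‖ ≤ ∑ i ∈ s, r i := by
  refine (norm_sum_le _ _).trans (sum_le_sum fun i hi => ?_)
  rw [norm_mul, norm_exp_ofReal_mul_I, mul_one, norm_real, Real.norm_of_nonneg (hr i hi)]

theorem sum_mul_cos_sub_le_norm_sum (r x : ι → ℝ) (c : ℝ) :
    ∑ i ∈ s, r i * Real.cos (x i - c) ≤ ‖∑ i ∈ s, (r i : ℂ) * exp (x i * I)‖ := by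
  have hrot : (∑ i ∈ s, (r i : ℂ) * exp (x i * I)) * exp (-(c * I))
      = ∑ i ∈ s, (r i : ℂ) * exp ((x i - c : ℝ) * I) := by
    rw [sum_mul]
    refine sum_congr rfl fun i _ => ?_
    rw [mul_assoc, ← Complex.exp_add]
    push_cast
    ring_nf
  calc ∑ i ∈ s, r i * Real.cos (x i - c)
      = ((∑ i ∈ s, (r i : ℂ) * exp (x i * I)) * exp (-(c * I))).re := by
        simp only [hrot, re_sum, re_ofReal_mul, exp_ofReal_mul_I_re]
    _ ≤ ‖(∑ i ∈ s, (r i : ℂ) * exp (x i * I)) * exp (-(c * I))‖ := re_le_norm _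
    _ = ‖∑ i ∈ s, (r i : ℂ) * exp (x i * I)‖ := by
        rw [norm_mul, ← neg_mul, ← ofReal_neg, norm_exp_ofReal_mul_I, mul_one]

theorem sum_mul_cos_half_width_le_norm_sum {a b : ℝ}
    (hba : b - a ≤ 2) {r φ : ι → ℝ} (hr : ∀ i ∈ s, 0 ≤ r i) (hφ : ∀ i ∈ s, φ i ∈ Set.Icc a b) :
    (∑ i ∈ s, r i) * Real.cos (π * (b - a) / 2)
      ≤ ‖∑ i ∈ s, (r i : ℂ) * exp ((π * φ i : ℝ) * I)‖ := by
  refine le_trans ?_ (sum_mul_cos_sub_le_norm_sum s r (fun i => π * φ i) (π * ((a + b) / 2)))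
  rw [sum_mul]
  exact sum_le_sum fun i hi => mul_le_mul_of_nonneg_left
    (Real.cos_half_width_le_cos_sub_midpoint (hφ i hi) hba) (hr i hi)

theorem weighted_mean_mem_Icc {a b : ℝ} {r φ : ι → ℝ}
    (hr : ∀ i ∈ s, 0 ≤ r i) (hpos : 0 < ∑ i ∈ s, r i) (hφ : ∀ i ∈ s, φ i ∈ Set.Icc a b) :
    (∑ i ∈ s, r i * φ i) / ∑ i ∈ s, r i ∈ Set.Icc a b := by
  have := (convex_Icc a b).centerMass_mem hr hpos hφ
  rwa [centerMass, smul_eq_mul, inv_mul_eq_div] at this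

end

theorem log_sub_log_mem_of_mul_le_of_le {m z c : ℝ} (hm : 0 < m) (hc : 0 < c)
    (hlow : m * c ≤ z) (hup : z ≤ m) :
    0 ≤ Real.log m - Real.log z ∧ Real.log m - Real.log z ≤ -Real.log c := by
  have hz : 0 < z := (mul_pos hm hc).trans_le hlow
  have hlog := Real.log_le_log (mul_pos hm hc) hlow
  rw [Real.log_mul hm.ne' hc.ne'] at hlog
  exact ⟨sub_nonneg.2 (Real.log_le_log hz hup), by linarith⟩

theorem stmt2_general (n : ℕ) (hn : 1 ≤ n) (a b : ℝ) (hab : a ≤ b) (hba : b - a < 1)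
    (r φ : Fin n → ℝ) (hr : ∀ k, 0 < r k) (hφ : ∀ k, φ k ∈ Set.Icc a b)
    (Z : ℂ) (hZdef : Z = ∑ k, (r k : ℂ) * Complex.exp ((Real.pi * φ k : ℝ) * Complex.I))
    (m : ℝ) (hm : m = ∑ k, r k)
    (φbar : ℝ) (hφbar : φbar = (∑ k, r k * φ k) / m)
    (θ : ℝ) (hθ : θ ∈ Set.Icc a b) :
    0 ≤ Real.log m - Real.log ‖Z‖ ∧
    Real.log m - Real.log ‖Z‖ ≤ -Real.log (Real.cos (Real.pi * (b - a) / 2)) ∧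
    |φbar - θ| ≤ b - a := by
  subst hZdef hm hφbar
  have hr' : ∀ k ∈ univ, 0 ≤ r k := fun k _ => (hr k).le
  have hmpos : 0 < ∑ k, r k := sum_pos (fun k _ => hr k) (univ_nonempty_iff.2 ⟨⟨0, hn⟩⟩)
  obtain ⟨hlog_nonneg, hlog_le⟩ := log_sub_log_mem_of_mul_le_of_le hmpos
    (Real.cos_half_width_pos hab hba)
    (sum_mul_cos_half_width_le_norm_sum univ (by linarith) hr' fun k _ => hφ k)
    (norm_sum_ofReal_mul_exp_le univ hr' _)
  exact ⟨hlog_nonneg, hlog_le,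
    Real.dist_le_of_mem_Icc (weighted_mean_mem_Icc univ hr' hmpos fun k _ => hφ k) hθ⟩

/-- With `z_k = r_k · exp(iπφ_k)`, `Z = Σ z_k`, `m = Σ r_k`, `φ̄ = (Σ r_k φ_k)/m` and
`θ ∈ [a,b]` the unique real with `Z = |Z|·exp(iπθ)`, one has
`0 ≤ log m − log|Z| ≤ −log(cos(π(b−a)/2))` and `|φ̄ − θ| ≤ b − a`. -/
theorem stmt2 (n : ℕ) (hn : 1 ≤ n) (a b : ℝ) (hab : a ≤ b) (hba : b - a < 1)
    (r φ : Fin n → ℝ) (hr : ∀ k, 0 < r k) (hφ : ∀ k, φ k ∈ Set.Icc a b)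
    (Z : ℂ) (hZdef : Z = ∑ k, (r k : ℂ) * Complex.exp ((Real.pi * φ k : ℝ) * Complex.I))
    (m : ℝ) (hm : m = ∑ k, r k)
    (φbar : ℝ) (hφbar : φbar = (∑ k, r k * φ k) / m)
    (θ : ℝ) (hθ : θ ∈ Set.Icc a b)
    (hZθ : Z = (‖Z‖ : ℂ) * Complex.exp ((Real.pi * θ : ℝ) * Complex.I)) :
    0 ≤ Real.log m - Real.log ‖Z‖ ∧
    Real.log m - Real.log ‖Z‖ ≤ -Real.log (Real.cos (Real.pi * (b - a) / 2)) ∧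
    |φbar - θ| ≤ b - a :=
  stmt2_general n hn a b hab hba r φ hr hφ Z hZdef m hm φbar hφbar θ hθ
end

section
/- Let z : ℝ → ℂ be a function such that lim_{t→∞} z(t)/(1 + |z(t)|) exists in ℂ, and suppose the imaginary part Im z(t) is eventually bounded, i.e. there exist M > 0 and t₀ such that |Im z(t)| ≤ M for all t ≥ t₀. Then exactly one of the following holds: (a) Re z(t) → +∞ as t → ∞; (b) Re z(t) → −∞ as t → ∞; (c) z(t) converges in ℂ as t → ∞. -/
open Complex Filter Topology

/-!
Since `‖(1 + ‖x‖)⁻¹ • x‖ = 1 - (1 + ‖x‖)⁻¹`, the norm of the limit `w` of `z / (1 + ‖z‖)` controls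
the growth of `z`. If `‖w‖ < 1`, then `1 + ‖z‖ → (1 - ‖w‖)⁻¹` and `z → w / (1 - ‖w‖)`. If
`‖w‖ = 1`, then `‖z‖ → ∞`; the bounded imaginary part makes `w` real, so `w = ±1`, and
`Re z = (1 + ‖z‖) · Re (z / (1 + ‖z‖))` tends to `±∞`.
-/

section NormedSpace

variable {α E : Type*} [NormedAddCommGroup E] [NormedSpace ℝ E] {l : Filter α} {f : α → E} {w : E}

lemma norm_inv_one_add_norm_smul (x : E) : ‖(1 + ‖x‖)⁻¹ • x‖ = 1 - (1 + ‖x‖)⁻¹ := by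
  have hpos : 0 < 1 + ‖x‖ := by positivity
  rw [norm_smul, norm_inv, Real.norm_of_nonneg hpos.le]
  field_simp
  ring

lemma tendsto_inv_one_add_norm_of_tendsto_smul
    (hf : Tendsto (fun a => (1 + ‖f a‖)⁻¹ • f a) l (𝓝 w)) :
    Tendsto (fun a => (1 + ‖f a‖)⁻¹) l (𝓝 (1 - ‖w‖)) := by
  have h := tendsto_const_nhds (x := (1 : ℝ)).sub hf.norm
  simpa only [norm_inv_one_add_norm_smul, sub_sub_cancel] using h

lemma norm_le_one_of_tendsto_inv_one_add_norm_smul [l.NeBot]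
    (hf : Tendsto (fun a => (1 + ‖f a‖)⁻¹ • f a) l (𝓝 w)) : ‖w‖ ≤ 1 :=
  sub_nonneg.mp <| ge_of_tendsto' (tendsto_inv_one_add_norm_of_tendsto_smul hf)
    fun a => by positivity

lemma tendsto_of_tendsto_inv_one_add_norm_smul
    (hf : Tendsto (fun a => (1 + ‖f a‖)⁻¹ • f a) l (𝓝 w)) (hw : ‖w‖ < 1) :
    Tendsto f l (𝓝 ((1 - ‖w‖)⁻¹ • w)) := by
  have h := ((tendsto_inv_one_add_norm_of_tendsto_smul hf).inv₀ (by linarith)).smul hf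
  refine h.congr fun a => ?_
  rw [inv_inv, smul_inv_smul₀ (by positivity)]

lemma tendsto_one_add_norm_atTop_of_tendsto_inv_one_add_norm_smul
    (hf : Tendsto (fun a => (1 + ‖f a‖)⁻¹ • f a) l (𝓝 w)) (hw : ‖w‖ = 1) :
    Tendsto (fun a => 1 + ‖f a‖) l atTop := by
  have h := tendsto_inv_one_add_norm_of_tendsto_smul hf
  rw [hw, sub_self] at h
  have h' : Tendsto (fun a => (1 + ‖f a‖)⁻¹) l (𝓝[>] 0) :=
    tendsto_nhdsWithin_of_tendsto_nhds_of_eventually_within _ h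
      (Eventually.of_forall fun a => Set.mem_Ioi.mpr (by positivity))
  simpa only [Pi.inv_def, inv_inv] using h'.inv_tendsto_nhdsGT_zero

end NormedSpace

namespace Complex

variable {α : Type*} {l : Filter α} {z : α → ℂ} {w : ℂ}

lemma div_one_add_norm_eq_smul (x : ℂ) : x / (1 + (‖x‖ : ℂ)) = (1 + ‖x‖)⁻¹ • x := by
  rw [real_smul, div_eq_inv_mul, ofReal_inv, ofReal_add, ofReal_one]

lemma im_eq_zero_of_tendsto_inv_one_add_norm_smul [l.NeBot]
    (hz : Tendsto (fun a => (1 + ‖z a‖)⁻¹ • z a) l (𝓝 w)) (hw : ‖w‖ = 1)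
    (him : IsBoundedUnder (· ≤ ·) l fun a => ‖(z a).im‖) : w.im = 0 := by
  have hinv : Tendsto (fun a => (1 + ‖z a‖)⁻¹) l (𝓝 0) := by
    simpa [hw] using tendsto_inv_one_add_norm_of_tendsto_smul hz
  have h0 := hinv.zero_mul_isBoundedUnder_le him
  refine tendsto_nhds_unique ((continuous_im.tendsto w).comp hz) ?_
  simpa only [Function.comp_def, smul_im, smul_eq_mul] using h0

lemma tendsto_re_atTop_or_atBot_of_tendsto_inv_one_add_norm_smul [l.NeBot]
    (hz : Tendsto (fun a => (1 + ‖z a‖)⁻¹ • z a) l (𝓝 w)) (hw : ‖w‖ = 1)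
    (him : IsBoundedUnder (· ≤ ·) l fun a => ‖(z a).im‖) :
    Tendsto (fun a => (z a).re) l atTop ∨ Tendsto (fun a => (z a).re) l atBot := by
  have hgrow := tendsto_one_add_norm_atTop_of_tendsto_inv_one_add_norm_smul hz hw
  have hre : Tendsto (fun a => (1 + ‖z a‖)⁻¹ * (z a).re) l (𝓝 w.re) := by
    simpa only [Function.comp_def, smul_re, smul_eq_mul] using (continuous_re.tendsto w).comp hz
  have hrecover : ∀ a, (1 + ‖z a‖) * ((1 + ‖z a‖)⁻¹ * (z a).re) = (z a).re := fun a =>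
    mul_inv_cancel_left₀ (by positivity) _
  have hw_re : |w.re| = 1 := by
    rw [abs_re_eq_norm.mpr (im_eq_zero_of_tendsto_inv_one_add_norm_smul hz hw him), hw]
  rcases (abs_eq zero_le_one).mp hw_re with h | h
  · exact .inl <| (hgrow.atTop_mul_pos (by rw [h]; exact one_pos) hre).congr hrecover
  · exact .inr <| (hgrow.atTop_mul_neg (by rw [h]; exact neg_one_lt_zero) hre).congr hrecover

lemma not_tendsto_nhds_of_tendsto_re_atTop [l.NeBot] (h : Tendsto (fun a => (z a).re) l atTop) :
    ¬ ∃ c, Tendsto z l (𝓝 c) := fun ⟨c, hc⟩ =>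
  ((continuous_re.tendsto c).comp hc).not_tendsto (disjoint_nhds_atTop _) h

lemma not_tendsto_nhds_of_tendsto_re_atBot [l.NeBot] (h : Tendsto (fun a => (z a).re) l atBot) :
    ¬ ∃ c, Tendsto z l (𝓝 c) := fun ⟨c, hc⟩ =>
  ((continuous_re.tendsto c).comp hc).not_tendsto (disjoint_nhds_atBot _) h

end Complex

/-- If `lim_{t→∞} z(t)/(1+|z(t)|)` exists and `Im z(t)` is eventually bounded, then exactly
one of the following holds: `Re z(t) → +∞`, `Re z(t) → −∞`, or `z(t)` converges in `ℂ`. -/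
theorem stmt4 (z : ℝ → ℂ)
    (hconv : ∃ w : ℂ, Tendsto (fun t => z t / (1 + (‖z t‖ : ℂ))) atTop (𝓝 w))
    (hIm : ∃ M : ℝ, 0 < M ∧ ∃ t₀ : ℝ, ∀ t ≥ t₀, |(z t).im| ≤ M) :
    (Tendsto (fun t => (z t).re) atTop atTop ∧
      ¬ Tendsto (fun t => (z t).re) atTop atBot ∧ ¬ (∃ l : ℂ, Tendsto z atTop (𝓝 l))) ∨
    (Tendsto (fun t => (z t).re) atTop atBot ∧
      ¬ Tendsto (fun t => (z t).re) atTop atTop ∧ ¬ (∃ l : ℂ, Tendsto z atTop (𝓝 l))) ∨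
    ((∃ l : ℂ, Tendsto z atTop (𝓝 l)) ∧
      ¬ Tendsto (fun t => (z t).re) atTop atTop ∧
      ¬ Tendsto (fun t => (z t).re) atTop atBot) := by
  obtain ⟨w, hw⟩ := hconv
  obtain ⟨M, -, t₀, hM⟩ := hIm
  have hz : Tendsto (fun t => (1 + ‖z t‖)⁻¹ • z t) atTop (𝓝 w) := by
    simpa only [Complex.div_one_add_norm_eq_smul] using hw
  have him : IsBoundedUnder (· ≤ ·) atTop fun t => ‖(z t).im‖ :=
    isBoundedUnder_of_eventually_le (a := M) (eventually_ge_atTop t₀ |>.mono hM)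
  rcases (norm_le_one_of_tendsto_inv_one_add_norm_smul hz).lt_or_eq with hlt | heq
  · have hlim := tendsto_of_tendsto_inv_one_add_norm_smul hz hlt
    have hre := (Complex.continuous_re.tendsto _).comp hlim
    exact .inr <| .inr ⟨⟨_, hlim⟩, hre.not_tendsto (disjoint_nhds_atTop _),
      hre.not_tendsto (disjoint_nhds_atBot _)⟩
  · rcases Complex.tendsto_re_atTop_or_atBot_of_tendsto_inv_one_add_norm_smul hz heq him
      with htop | hbot
    · exact .inl ⟨htop, htop.not_tendsto disjoint_atTop_atBot,
        Complex.not_tendsto_nhds_of_tendsto_re_atTop htop⟩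
    · exact .inr <| .inl ⟨hbot, hbot.not_tendsto disjoint_atBot_atTop,
        Complex.not_tendsto_nhds_of_tendsto_re_atBot hbot⟩
end

section
/- Let h : ℝ → ℝ be a function such that for every integer a, at least one of the following holds: (i) h(t) − a → 0 as t → ∞; (ii) there exists c > 0 such that h(t) − a ≥ c for all sufficiently large t; (iii) there exists c > 0 such that a − h(t) ≥ c for all sufficiently large t. Then exactly one of the following holds: (1) h(t) → +∞ or h(t) → −∞ as t → ∞; (2) there exists an integer a such that h(t) → a as t → ∞; (3) there exist an integer a and c > 0 such that a − 1 + c ≤ h(t) ≤ a − c for all sufficiently large t. -/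
open Filter Topology

/-- A trapped function cannot tend to +∞. -/
lemma aux_trapped_not_top {h : ℝ → ℝ} {a : ℤ} {c : ℝ} (hc : 0 < c)
    (hev : ∀ᶠ t in atTop, (a : ℝ) - 1 + c ≤ h t ∧ h t ≤ (a : ℝ) - c) :
    ¬ Tendsto h atTop atTop := by
  intro H
  have h1 : ∀ᶠ t in atTop, (a : ℝ) ≤ h t := H.eventually_ge_atTop _
  obtain ⟨t, ht1, ht2⟩ := (h1.and hev).exists
  linarith [ht2.2]

/-- A trapped function cannot tend to -∞. -/
lemma aux_trapped_not_bot {h : ℝ → ℝ} {a : ℤ} {c : ℝ} (hc : 0 < c)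
    (hev : ∀ᶠ t in atTop, (a : ℝ) - 1 + c ≤ h t ∧ h t ≤ (a : ℝ) - c) :
    ¬ Tendsto h atTop atBot := by
  intro H
  have h1 : ∀ᶠ t in atTop, h t ≤ (a : ℝ) - 1 := H.eventually_le_atBot _
  obtain ⟨t, ht1, ht2⟩ := (h1.and hev).exists
  linarith [ht2.1]

/-- A trapped function cannot converge to an integer. -/
lemma aux_trapped_not_conv {h : ℝ → ℝ} {a : ℤ} {c : ℝ} (hc : 0 < c)
    (hev : ∀ᶠ t in atTop, (a : ℝ) - 1 + c ≤ h t ∧ h t ≤ (a : ℝ) - c) :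
    ¬ ∃ b : ℤ, Tendsto h atTop (𝓝 (b : ℝ)) := by
  rintro ⟨b, hb⟩
  have h1 : (a : ℝ) - 1 + c ≤ b := ge_of_tendsto hb (hev.mono fun t ht => ht.1)
  have h2 : (b : ℝ) ≤ (a : ℝ) - c := le_of_tendsto hb (hev.mono fun t ht => ht.2)
  have hb1 : a - 1 < b := by exact_mod_cast show (a : ℝ) - 1 < b by linarith
  have hb2 : b < a := by exact_mod_cast show (b : ℝ) < a by linarith
  omega

/-- Trichotomy for a real function `h` such that for every integer `a`, `h(t) − a → 0`, or
`h(t) − a` is eventually `≥ c > 0`, or `a − h(t)` is eventually `≥ c > 0`: exactly one of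
(1) `h → ±∞`, (2) `h → a` for an integer `a`, (3) `h` is eventually trapped in
`[a − 1 + c, a − c]` for some integer `a` and some `c > 0`. -/
theorem stmt5 (h : ℝ → ℝ)
    (hyp : ∀ a : ℤ,
      Tendsto (fun t => h t - (a : ℝ)) atTop (𝓝 0) ∨
      (∃ c : ℝ, 0 < c ∧ ∀ᶠ t in atTop, c ≤ h t - (a : ℝ)) ∨
      (∃ c : ℝ, 0 < c ∧ ∀ᶠ t in atTop, c ≤ (a : ℝ) - h t)) :
    ((Tendsto h atTop atTop ∨ Tendsto h atTop atBot) ∧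
      ¬ (∃ a : ℤ, Tendsto h atTop (𝓝 (a : ℝ))) ∧
      ¬ (∃ a : ℤ, ∃ c : ℝ, 0 < c ∧
          ∀ᶠ t in atTop, (a : ℝ) - 1 + c ≤ h t ∧ h t ≤ (a : ℝ) - c)) ∨
    ((∃ a : ℤ, Tendsto h atTop (𝓝 (a : ℝ))) ∧
      ¬ (Tendsto h atTop atTop ∨ Tendsto h atTop atBot) ∧
      ¬ (∃ a : ℤ, ∃ c : ℝ, 0 < c ∧
          ∀ᶠ t in atTop, (a : ℝ) - 1 + c ≤ h t ∧ h t ≤ (a : ℝ) - c)) ∨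
    ((∃ a : ℤ, ∃ c : ℝ, 0 < c ∧
        ∀ᶠ t in atTop, (a : ℝ) - 1 + c ≤ h t ∧ h t ≤ (a : ℝ) - c) ∧
      ¬ (Tendsto h atTop atTop ∨ Tendsto h atTop atBot) ∧
      ¬ (∃ a : ℤ, Tendsto h atTop (𝓝 (a : ℝ)))) := by
  by_cases hconv : ∃ a : ℤ, Tendsto h atTop (𝓝 (a : ℝ))
  · obtain ⟨a, ha⟩ := hconv
    refine Or.inr (Or.inl ⟨⟨a, ha⟩, ?_, ?_⟩)
    · rintro (H | H)
      · exact not_tendsto_atTop_of_tendsto_nhds ha H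
      · exact not_tendsto_atBot_of_tendsto_nhds ha H
    · rintro ⟨b, c, hc, hev⟩
      exact aux_trapped_not_conv hc hev ⟨a, ha⟩
  · -- no convergence to any integer
    set Up : ℤ → Prop := fun a => ∃ c : ℝ, 0 < c ∧ ∀ᶠ t in atTop, c ≤ h t - (a : ℝ) with hUp
    set Dn : ℤ → Prop := fun a => ∃ c : ℝ, 0 < c ∧ ∀ᶠ t in atTop, c ≤ (a : ℝ) - h t with hDn
    have key : ∀ a : ℤ, Up a ∨ Dn a := by
      intro a
      rcases hyp a with H | H | H
      · exfalso
        apply hconv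
        refine ⟨a, ?_⟩
        have := H.add_const (a : ℝ)
        simpa using this
      · exact Or.inl H
      · exact Or.inr H
    have notboth : ∀ a : ℤ, ¬ (Up a ∧ Dn a) := by
      rintro a ⟨⟨c1, hc1, he1⟩, ⟨c2, hc2, he2⟩⟩
      obtain ⟨t, ht1, ht2⟩ := (he1.and he2).exists
      linarith
    have upmono : ∀ a b : ℤ, b ≤ a → Up a → Up b := by
      rintro a b hba ⟨c, hc, he⟩
      refine ⟨c, hc, he.mono fun t ht => ?_⟩
      have : (b : ℝ) ≤ a := by exact_mod_cast hba
      linarith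
    have dnmono : ∀ a b : ℤ, a ≤ b → Dn a → Dn b := by
      rintro a b hab ⟨c, hc, he⟩
      refine ⟨c, hc, he.mono fun t ht => ?_⟩
      have : (a : ℝ) ≤ b := by exact_mod_cast hab
      linarith
    by_cases hallUp : ∀ a : ℤ, Up a
    · -- h → +∞
      refine Or.inl ⟨Or.inl ?_, hconv, ?_⟩
      · rw [tendsto_atTop]
        intro M
        obtain ⟨a, haM⟩ := exists_int_ge M
        obtain ⟨c, hc, he⟩ := hallUp a
        exact he.mono fun t ht => by linarith
      · rintro ⟨a, c, hc, hev⟩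
        obtain ⟨c', hc', he'⟩ := hallUp a
        obtain ⟨t, ht1, ht2⟩ := (he'.and hev).exists
        linarith [ht2.2]
    · by_cases hallDn : ∀ a : ℤ, Dn a
      · refine Or.inl ⟨Or.inr ?_, hconv, ?_⟩
        · rw [tendsto_atBot]
          intro M
          obtain ⟨a, haM⟩ := exists_int_le M
          obtain ⟨c, hc, he⟩ := hallDn a
          exact he.mono fun t ht => by linarith
        · rintro ⟨a, c, hc, hev⟩
          obtain ⟨c', hc', he'⟩ := hallDn (a - 1)
          obtain ⟨t, ht1, ht2⟩ := (he'.and hev).exists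
          have : ((a : ℤ) - 1 : ℤ) = (a : ℤ) - 1 := rfl
          push_cast at ht1
          linarith [ht2.1]
      · -- boundary case: find a with Up (a-1) ∧ Dn a
        push_neg at hallUp hallDn
        obtain ⟨a0, ha0⟩ := hallUp
        obtain ⟨a1, ha1⟩ := hallDn
        have hDna0 : Dn a0 := (key a0).resolve_left ha0
        have hUpa1 : Up a1 := (key a1).resolve_right ha1
        have hlt : a1 < a0 := by
          by_contra hle
          push_neg at hle
          exact notboth a0 ⟨upmono a1 a0 hle hUpa1, hDna0⟩
        -- least k with Dn (a1 + 1 + k)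
        have hex : ∃ k : ℕ, Dn (a1 + 1 + k) := by
          refine ⟨(a0 - a1 - 1).toNat, ?_⟩
          have : a1 + 1 + ((a0 - a1 - 1).toNat : ℤ) = a0 := by omega
          rw [this]; exact hDna0
        classical
        let k := Nat.find hex
        have hk : Dn (a1 + 1 + (k : ℤ)) := Nat.find_spec hex
        have hUpPrev : Up (a1 + 1 + (k : ℤ) - 1) := by
          rcases Nat.eq_zero_or_pos k with h0 | hpos
          · have : a1 + 1 + (k : ℤ) - 1 = a1 := by rw [h0]; push_cast; ring
            rw [this]; exact hUpa1
          · have hnot : ¬ Dn (a1 + 1 + ((k - 1 : ℕ) : ℤ)) := Nat.find_min hex (by omega)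
            have heq : a1 + 1 + (k : ℤ) - 1 = a1 + 1 + ((k - 1 : ℕ) : ℤ) := by
              push_cast [Nat.cast_sub hpos]; ring
            rw [heq]
            exact (key _).resolve_right hnot
        set a := a1 + 1 + (k : ℤ) with ha_def
        obtain ⟨c1, hc1, he1⟩ := hUpPrev
        obtain ⟨c2, hc2, he2⟩ := hk
        have hcmin : 0 < min c1 c2 := lt_min hc1 hc2
        have htrap : ∀ᶠ t in atTop, (a : ℝ) - 1 + min c1 c2 ≤ h t ∧ h t ≤ (a : ℝ) - min c1 c2 := by
          filter_upwards [he1, he2] with t h1 h2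
          have hcast : ((a - 1 : ℤ) : ℝ) = (a : ℝ) - 1 := by push_cast; ring
          rw [hcast] at h1
          constructor
          · have := min_le_left c1 c2; linarith
          · have := min_le_right c1 c2; linarith
        refine Or.inr (Or.inr ⟨⟨a, min c1 c2, hcmin, htrap⟩, ?_, hconv⟩)
        rintro (H | H)
        · exact aux_trapped_not_top hcmin htrap H
        · exact aux_trapped_not_bot hcmin htrap H
end

section
/- Let θ ∈ (−π/2, π/2) and c > 0 be real numbers, and for t ≥ 0 define τ(t) = 2πi/(t·e^{iθ} + c) ∈ ℂ. Let d₁ > 0, r₂ > 0 and d₂ be real numbers, and for t sufficiently large set w(t) = Log(d₁·τ(t)/(r₂ + d₂·τ(t))), where Log denotes the principal branch of the complex logarithm. Then w(t) is defined for all sufficiently large t, Re w(t) → −∞ as t → ∞, Im w(t) is eventually bounded, and w(t)/(1 + |w(t)|) → −1 as t → ∞. -/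
open Complex Filter Topology

/-!
Since `τ(t) ∼ 2πi e^{-iθ}/t`, the argument `Z(t)` of the logarithm satisfies
`t·Z(t) → 2πi d₁ e^{-iθ}/r₂`, a number with imaginary part `2π d₁ cos θ / r₂ > 0`. So `Z(t)`
eventually lies in the open upper half-plane and tends to `0`: `Re w = log |Z| → −∞` while
`|Im w| = |arg Z| ≤ π`, and a complex number whose real part tends to `−∞` with bounded
imaginary part is asymptotic to the ray through `−1`.
-/

lemma tendsto_ofReal_inv_atTop_zero : Tendsto (fun t : ℝ => (t : ℂ)⁻¹) atTop (𝓝 0) := by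
  simpa using tendsto_ofReal_iff.2 tendsto_inv_atTop_zero

lemma tendsto_zero_of_tendsto_ofReal_mul {f : ℝ → ℂ} {L : ℂ}
    (h : Tendsto (fun t : ℝ => (t : ℂ) * f t) atTop (𝓝 L)) : Tendsto f atTop (𝓝 0) := by
  refine (mul_zero L ▸ h.mul tendsto_ofReal_inv_atTop_zero).congr' ?_
  filter_upwards [eventually_ne_atTop 0] with t ht
  exact mul_div_cancel_left₀ _ (ofReal_ne_zero.2 ht)

lemma tendsto_ofReal_mul_div_ofReal_mul_add (a u c : ℂ) (hu : u ≠ 0) :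
    Tendsto (fun t : ℝ => (t : ℂ) * (a / (t * u + c))) atTop (𝓝 (a / u)) := by
  have hden : Tendsto (fun t : ℝ => u + c * (t : ℂ)⁻¹) atTop (𝓝 u) := by
    simpa using tendsto_const_nhds.add (tendsto_ofReal_inv_atTop_zero.const_mul c)
  refine (tendsto_const_nhds.div hden hu).congr' ?_
  filter_upwards [eventually_ne_atTop 0] with t ht
  have hden_eq : u + c * (t : ℂ)⁻¹ = (t * u + c) / t := by
    field_simp [ofReal_ne_zero.2 ht]
  simp only [Pi.div_apply]
  rw [hden_eq, div_div_eq_mul_div]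
  ring

lemma eventually_im_pos_of_tendsto_ofReal_mul {f : ℝ → ℂ} {L : ℂ}
    (h : Tendsto (fun t : ℝ => (t : ℂ) * f t) atTop (𝓝 L)) (hL : 0 < L.im) :
    ∀ᶠ t in atTop, 0 < (f t).im := by
  filter_upwards [(continuous_im.tendsto L).comp h |>.eventually_const_lt hL,
    eventually_gt_atTop 0] with t hpos ht
  rw [Function.comp_apply, im_ofReal_mul] at hpos
  exact pos_of_mul_pos_right hpos ht.le

lemma tendsto_log_re_atBot {α : Type*} {l : Filter α} {f : α → ℂ}
    (h : Tendsto f l (𝓝[≠] 0)) : Tendsto (fun x => (log (f x)).re) l atBot := by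
  simpa [Function.comp_def, log_re] using
    (Real.tendsto_log_nhdsGT_zero.comp tendsto_norm_nhdsNE_zero).comp h

lemma norm_add_norm_le_of_re_nonpos {z : ℂ} (hz : z.re ≤ 0) : ‖z + ‖z‖‖ ≤ 2 * |z.im| := by
  have hre : |z.re| ≤ ‖z‖ := abs_re_le_norm z
  have hnorm : ‖z‖ ≤ |z.re| + |z.im| := norm_le_abs_re_add_abs_im z
  rw [abs_of_nonpos hz] at hre hnorm
  calc ‖z + ‖z‖‖ ≤ |(z + ‖z‖).re| + |(z + ‖z‖).im| := norm_le_abs_re_add_abs_im _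
    _ = (z.re + ‖z‖) + |z.im| := by simp [abs_of_nonneg (by linarith : 0 ≤ z.re + ‖z‖)]
    _ ≤ 2 * |z.im| := by linarith

lemma tendsto_div_one_add_norm_of_re_atBot {α : Type*} {l : Filter α} {w : α → ℂ} {M : ℝ}
    (hre : Tendsto (fun x => (w x).re) l atBot) (him : ∀ᶠ x in l, |(w x).im| ≤ M) :
    Tendsto (fun x => w x / (1 + ‖w x‖)) l (𝓝 (-1)) := by
  have hnorm : Tendsto (fun x => 1 + ‖w x‖) l atTop :=
    tendsto_atTop_add_const_left _ 1 <| tendsto_atTop_mono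
      (fun x => (neg_le_abs _).trans (abs_re_le_norm (w x))) (tendsto_neg_atBot_atTop.comp hre)
  refine tendsto_iff_norm_sub_tendsto_zero.2 <| squeeze_zero' (.of_forall fun _ => norm_nonneg _) ?_
    ((tendsto_const_nhds (x := 1 + 2 * M)).div_atTop hnorm)
  filter_upwards [him, hre.eventually_le_atBot 0] with x hx_im hx_re
  have hpos : (0 : ℝ) < 1 + ‖w x‖ := by positivity
  have hsub : w x / (1 + ‖w x‖) - -1 = (w x + ‖w x‖ + 1) / ((1 + ‖w x‖ : ℝ) : ℂ) := by
    have hpos' : (1 + ‖w x‖ : ℂ) ≠ 0 := by exact_mod_cast hpos.ne'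
    rw [sub_neg_eq_add, div_add_one hpos', ofReal_add, ofReal_one]
    ring
  rw [hsub, norm_div, norm_real, Real.norm_of_nonneg hpos.le]
  gcongr
  calc ‖w x + ‖w x‖ + 1‖ ≤ ‖w x + ‖w x‖‖ + 1 := by simpa using norm_add_le (w x + ‖w x‖) 1
    _ ≤ 1 + 2 * M := by linarith [norm_add_norm_le_of_re_nonpos hx_re]

lemma im_two_pi_I_div_exp_mul_I (θ : ℝ) :
    (2 * (Real.pi : ℂ) * I / exp (θ * I)).im = 2 * Real.pi * Real.cos θ := by
  rw [div_eq_mul_inv, ← exp_neg, ← neg_mul, ← ofReal_neg, mul_im, exp_ofReal_mul_I_re,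
    exp_ofReal_mul_I_im]
  simp

theorem stmt11_general (θ c : ℝ) (hθ : θ ∈ Set.Ioo (-(Real.pi / 2)) (Real.pi / 2))
    (τ : ℝ → ℂ)
    (hτ : ∀ t : ℝ, τ t =
      (2 * (Real.pi : ℂ) * Complex.I) / ((t : ℂ) * Complex.exp ((θ : ℂ) * Complex.I) + (c : ℂ)))
    (d₁ r₂ d₂ : ℝ) (hd₁ : 0 < d₁) (hr₂ : 0 < r₂)
    (w : ℝ → ℂ)
    (hw : ∀ t : ℝ, w t = Complex.log ((d₁ : ℂ) * τ t / ((r₂ : ℂ) + (d₂ : ℂ) * τ t))) :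
    (∀ᶠ t in atTop, ((r₂ : ℂ) + (d₂ : ℂ) * τ t ≠ 0 ∧
        (d₁ : ℂ) * τ t / ((r₂ : ℂ) + (d₂ : ℂ) * τ t) ∈ Complex.slitPlane)) ∧
    Tendsto (fun t => (w t).re) atTop atBot ∧
    (∃ M : ℝ, 0 < M ∧ ∀ᶠ t in atTop, |(w t).im| ≤ M) ∧
    Tendsto (fun t => w t / (1 + (‖w t‖ : ℂ))) atTop (𝓝 (-1)) := by
  set Z : ℝ → ℂ := fun t => d₁ * τ t / (r₂ + d₂ * τ t)
  set L : ℂ := 2 * Real.pi * I / exp (θ * I)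
  have htτ : Tendsto (fun t : ℝ => (t : ℂ) * τ t) atTop (𝓝 L) := by
    simpa only [hτ] using tendsto_ofReal_mul_div_ofReal_mul_add _ _ c (exp_ne_zero _)
  have htZ : Tendsto (fun t : ℝ => (t : ℂ) * Z t) atTop (𝓝 (d₁ * L / r₂)) := by
    have hden : Tendsto (fun t => (r₂ : ℂ) + d₂ * τ t) atTop (𝓝 r₂) := by
      simpa using ((tendsto_zero_of_tendsto_ofReal_mul htτ).const_mul (d₂ : ℂ)).const_add (r₂ : ℂ)
    refine ((htτ.const_mul (d₁ : ℂ)).div hden (ofReal_ne_zero.2 hr₂.ne')).congr fun t => ?_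
    simp only [Z, Pi.div_apply]
    ring
  have hLim : 0 < (d₁ * L / r₂).im := by
    rw [div_ofReal_im, im_ofReal_mul, im_two_pi_I_div_exp_mul_I]
    have := Real.cos_pos_of_mem_Ioo hθ
    positivity
  have hZim : ∀ᶠ t in atTop, 0 < (Z t).im := eventually_im_pos_of_tendsto_ofReal_mul htZ hLim
  have hZne : ∀ᶠ t in atTop, Z t ≠ 0 :=
    hZim.mono fun t ht => ne_of_apply_ne im (by simpa using ht.ne')
  have hZ : Tendsto Z atTop (𝓝[≠] 0) :=
    tendsto_nhdsWithin_iff.2 ⟨tendsto_zero_of_tendsto_ofReal_mul htZ, hZne⟩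
  have hre : Tendsto (fun t => (w t).re) atTop atBot := by
    simpa only [hw] using tendsto_log_re_atBot hZ
  have him : ∀ t, |(w t).im| ≤ Real.pi := fun t => by
    rw [hw, log_im]
    exact abs_arg_le_pi _
  refine ⟨?_, hre, ⟨Real.pi, Real.pi_pos, .of_forall him⟩,
    tendsto_div_one_add_norm_of_re_atBot hre (.of_forall him)⟩
  filter_upwards [hZim, hZne] with t hZim_t hZne_t
  exact ⟨(div_ne_zero_iff.1 hZne_t).2, mem_slitPlane_iff.2 (.inr hZim_t.ne')⟩

/-- With `τ(t) = 2πi/(t·e^{iθ} + c)` (`θ ∈ (−π/2,π/2)`, `c > 0`), `d₁ > 0`, `r₂ > 0`, and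
`w(t) = Log(d₁τ(t)/(r₂ + d₂τ(t)))`, the argument of the logarithm is eventually in the slit
plane (so `w` is defined for large `t`), `Re w(t) → −∞`, `Im w(t)` is eventually bounded,
and `w(t)/(1 + |w(t)|) → −1` as `t → ∞`. -/
theorem stmt11 (θ c : ℝ) (hθ : θ ∈ Set.Ioo (-(Real.pi / 2)) (Real.pi / 2)) (hc : 0 < c)
    (τ : ℝ → ℂ)
    (hτ : ∀ t : ℝ, τ t =
      (2 * (Real.pi : ℂ) * Complex.I) / ((t : ℂ) * Complex.exp ((θ : ℂ) * Complex.I) + (c : ℂ)))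
    (d₁ r₂ d₂ : ℝ) (hd₁ : 0 < d₁) (hr₂ : 0 < r₂)
    (w : ℝ → ℂ)
    (hw : ∀ t : ℝ, w t = Complex.log ((d₁ : ℂ) * τ t / ((r₂ : ℂ) + (d₂ : ℂ) * τ t))) :
    (∀ᶠ t in atTop, ((r₂ : ℂ) + (d₂ : ℂ) * τ t ≠ 0 ∧
        (d₁ : ℂ) * τ t / ((r₂ : ℂ) + (d₂ : ℂ) * τ t) ∈ Complex.slitPlane)) ∧
    Tendsto (fun t => (w t).re) atTop atBot ∧
    (∃ M : ℝ, 0 < M ∧ ∀ᶠ t in atTop, |(w t).im| ≤ M) ∧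
    Tendsto (fun t => w t / (1 + (‖w t‖ : ℂ))) atTop (𝓝 (-1)) :=
  stmt11_general θ c hθ τ hτ d₁ r₂ d₂ hd₁ hr₂ w hw
end
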